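/- Let p be an odd prime with Pisano period l_p = 2p+2 and β(p) = 4, and let C = ⟨f(x)⟩ be the cyclic code of parameters [2p+2, 2, 2p−2] over F_p generated by the Fibonacci polynomial f(x) (coordinates indexed 0, 1, …, 2p+1). Then C has exactly (p−1)/2 minimal codewords; each of the coordinates (p+1)/2, p+1, and 3(p+1)/2 belongs to the support of every minimal codeword of C; and each other coordinate i with 1 ≤ i ≤ 2p+1 and i ∉ {(p+1)/2, p+1, 3(p+1)/2} belongs to the support of exactly (p−3)/2 of the minimal codewords of C. -/

import Mathlib

open Polynomial

/-- The Fibonacci sequence over `ZMod p`: `F 0 = 0`, `F 1 = 1`, `F (n+2) = F (n+1) + F n`. -/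
def fibMod (p : ℕ) : ℕ → ZMod p
  | 0 => 0
  | 1 => 1
  | n + 2 => fibMod p (n + 1) + fibMod p n

/-- The Pisano period of `p`: the least `t > 0` with `F t = F 0 = 0` and `F (t+1) = F 1 = 1`. -/
noncomputable def pisano (p : ℕ) : ℕ :=
  sInf {t : ℕ | 0 < t ∧ fibMod p t = 0 ∧ fibMod p (t + 1) = 1}

/-- `β(p)`: the number of indices `0 ≤ i < l_p` with `F i = 0` in `ZMod p`. -/
noncomputable def betaP (p : ℕ) : ℕ :=
  ((Finset.range (pisano p)).filter fun i => fibMod p i = 0).card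

/-- The Fibonacci polynomial `f(x) = ∑_{i=0}^{l_p - 1} F_i x^i` over `ZMod p`. -/
noncomputable def fibPoly (p : ℕ) : (ZMod p)[X] :=
  ∑ i ∈ Finset.range (pisano p), C (fibMod p i) * X ^ i

/-- Cyclic shift of a vector of length `l`: the shift `v ↦ (v_{l-1}, v_0, …, v_{l-2})`,
which corresponds to multiplication by `x` modulo `x^l - 1` on coefficient vectors. -/
def cyclicShift (p l : ℕ) (v : Fin l → ZMod p) : Fin l → ZMod p :=
  fun i => v ⟨((i : ℕ) + (l - 1)) % l, Nat.mod_lt _ i.pos⟩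

/-- The coefficient vector of length `l` of a polynomial. -/
def polyVec (p l : ℕ) (g : (ZMod p)[X]) : Fin l → ZMod p := fun i => g.coeff i

/-- The cyclic code of length `l` generated by `g`: the ideal generated by the image of `g`
in `F_p[x]/(x^l - 1)`, identified with the subspace of `F_p^l` of coefficient vectors via
`a_0 + a_1 x + ⋯ + a_{l-1} x^{l-1} ↦ (a_0, …, a_{l-1})`; equivalently (since multiplication
by `x` is the cyclic shift), the `F_p`-span of all cyclic shifts of the coefficient vector
of `g`. -/
noncomputable def cyclicCode (p l : ℕ) (g : (ZMod p)[X]) :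
    Submodule (ZMod p) (Fin l → ZMod p) :=
  Submodule.span (ZMod p) {w | ∃ k : ℕ, w = (cyclicShift p l)^[k] (polyVec p l g)}

/-- The cyclic code of length `l` generated by the Fibonacci polynomial `f(x)`. -/
noncomputable def fibCode (p l : ℕ) : Submodule (ZMod p) (Fin l → ZMod p) :=
  cyclicCode p l (fibPoly p)

/-- A minimal codeword of a code `Cc ⊆ F_p^l`: a nonzero codeword `c` with first coordinate
`c 0 = 1` such that every codeword of `Cc` whose support is contained in `supp(c)` is a
scalar multiple of `c`. -/
def IsMinimalCodeword (p l : ℕ) (Cc : Submodule (ZMod p) (Fin l → ZMod p))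
    (c : Fin l → ZMod p) : Prop :=
  c ∈ Cc ∧ c ≠ 0 ∧ (∀ h : 0 < l, c ⟨0, h⟩ = 1) ∧
    ∀ v ∈ Cc, (∀ i, v i ≠ 0 → c i ≠ 0) → ∃ k : ZMod p, v = k • c

/-! Write `l = l_p` and `α` for the rank of apparition of `p`, so that `F n = 0 ↔ α ∣ n`
(strong divisibility of `F`). Since `F_l = 0` and `F_{l+1} = 1`, the cyclic shifts of `f` are the
vectors `(F_{m+i})_i`, and the addition formula `F_{m+i} = F_{m+1} F_i + F_m F_{i-1}` shows that
`C` is spanned by `(F_i)_i` and `(F_{i-1})_i`. In such a two-dimensional code the minimal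
codewords are the normalised codewords `x (F_i) + (F_{i-1})` with a zero coordinate, and each of
them is a normalised shift `F_k⁻¹ (F_{k+i})_i` with `0 < k < α`, whose zeros are the `i` with
`α ∣ k + i`. Finally `β(p) = l / α = 4` gives `α = (p + 1) / 2`: there are `α - 1` minimal
codewords, none vanishes at a multiple of `α`, and every other coordinate is a zero of exactly
one of them. -/

open Finset

lemma fibMod_eq_fib (p n : ℕ) : fibMod p n = Nat.fib n := by
  induction n using Nat.twoStepInduction with
  | zero => simp [fibMod]
  | one => simp [fibMod]
  | more n ih₁ ih₂ => rw [fibMod, Nat.fib_add_two, Nat.cast_add, ih₁, ih₂, add_comm]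

lemma fibMod_eq_zero_iff_dvd_fib {p n : ℕ} : fibMod p n = 0 ↔ p ∣ Nat.fib n := by
  rw [fibMod_eq_fib, ZMod.natCast_eq_zero_iff]

lemma fibMod_add (p m n : ℕ) :
    fibMod p (m + n + 1) = fibMod p m * fibMod p n + fibMod p (m + 1) * fibMod p (n + 1) := by
  simp only [fibMod_eq_fib, Nat.fib_add, Nat.cast_add, Nat.cast_mul]

lemma fibMod_ne_zero_of_succ_eq_zero {p n : ℕ} (hp : p ≠ 1) (h : fibMod p (n + 1) = 0) :
    fibMod p n ≠ 0 := fun h' => hp <| Nat.dvd_one.1 <|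
  (Nat.fib_coprime_fib_succ n).gcd_eq_one ▸
    Nat.dvd_gcd (fibMod_eq_zero_iff_dvd_fib.1 h') (fibMod_eq_zero_iff_dvd_fib.1 h)

lemma fibMod_eq_zero_iff_dvd {p α : ℕ} (hα : IsLeast {t | 0 < t ∧ fibMod p t = 0} α)
    (n : ℕ) : fibMod p n = 0 ↔ α ∣ n := by
  refine ⟨fun hn => ?_, fun hdvd => ?_⟩
  · have hgcd : fibMod p (α.gcd n) = 0 := by
      rw [fibMod_eq_zero_iff_dvd_fib, Nat.fib_gcd]
      exact Nat.dvd_gcd (fibMod_eq_zero_iff_dvd_fib.1 hα.1.2) (fibMod_eq_zero_iff_dvd_fib.1 hn)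
    have hle : α ≤ α.gcd n := hα.2 ⟨Nat.gcd_pos_of_pos_left n hα.1.1, hgcd⟩
    exact Nat.gcd_eq_left_iff_dvd.1 (le_antisymm (Nat.gcd_le_left n hα.1.1) hle)
  · rw [fibMod_eq_zero_iff_dvd_fib]
    exact (fibMod_eq_zero_iff_dvd_fib.1 hα.1.2).trans (Nat.fib_dvd α n hdvd)

lemma fibMod_ne_zero_of_mem_Ioo {p α : ℕ} (hα : IsLeast {t | 0 < t ∧ fibMod p t = 0} α)
    {k : ℕ} (hk : k ∈ Ioo 0 α) : fibMod p k ≠ 0 := fun h =>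
  (hα.2 ⟨(mem_Ioo.1 hk).1, h⟩).not_gt (mem_Ioo.1 hk).2

section Period

variable {p l : ℕ}

lemma fibMod_periodic (h₀ : fibMod p l = 0) (h₁ : fibMod p (l + 1) = 1) :
    Function.Periodic (fibMod p) l := by
  rintro (_ | n)
  · simpa [fibMod] using h₀
  · rw [show n + 1 + l = n + l + 1 by ring, fibMod_add, h₀, h₁]
    ring

lemma fibMod_sub_one (h₀ : fibMod p l = 0) (h₁ : fibMod p (l + 1) = 1) (hl : 0 < l) :
    fibMod p (l - 1) = 1 := by
  obtain ⟨m, rfl⟩ : ∃ m, l = m + 1 := ⟨l - 1, by omega⟩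
  simpa [fibMod, h₀] using h₁

lemma fibMod_sub_one_add_ne_zero (h₀ : fibMod p l = 0) (h₁ : fibMod p (l + 1) = 1)
    (hl : 0 < l) (hp : p ≠ 1) {i : ℕ} (hi : fibMod p i = 0) : fibMod p (l - 1 + i) ≠ 0 := by
  refine fibMod_ne_zero_of_succ_eq_zero hp ?_
  rwa [show l - 1 + i + 1 = i + l by omega, fibMod_periodic h₀ h₁]

end Period

lemma card_filter_dvd_range_mul {a : ℕ} (ha : 0 < a) (m : ℕ) :
    #{i ∈ range (a * m) | a ∣ i} = m := by
  have himage : {i ∈ range (a * m) | a ∣ i} =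
      (range m).map ⟨(a * ·), mul_right_injective₀ ha.ne'⟩ := by
    ext i
    simp only [mem_filter, mem_range, mem_map, Function.Embedding.coeFn_mk]
    constructor
    · rintro ⟨hi, j, rfl⟩
      exact ⟨j, lt_of_mul_lt_mul_left hi ha.le, rfl⟩
    · rintro ⟨j, hj, rfl⟩
      exact ⟨Nat.mul_lt_mul_of_pos_left hj ha, dvd_mul_right a j⟩
  rw [himage, card_map, card_range]

def fibVec (p l m : ℕ) : Fin l → ZMod p := fun i => fibMod p (m + i)

section FibCode

variable {p l : ℕ}

lemma polyVec_fibPoly (hl : l ≤ pisano p) : polyVec p l (fibPoly p) = fibVec p l 0 := by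
  funext i
  simp only [polyVec, fibVec, fibPoly, finsetSum_coeff, coeff_C_mul_X_pow, zero_add]
  rw [Finset.sum_eq_single (i : ℕ) (fun j _ hj => if_neg hj.symm)
    (fun hi => absurd (mem_range.2 (i.2.trans_le hl)) hi), if_pos rfl]

lemma cyclicShift_fibVec (hper : Function.Periodic (fibMod p) l) (m : ℕ) :
    cyclicShift p l (fibVec p l m) = fibVec p l (m + (l - 1)) := by
  funext i
  simp only [cyclicShift, fibVec]
  rw [← hper.map_mod_nat, Nat.add_mod_mod, hper.map_mod_nat, add_assoc, add_comm (l - 1)]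

lemma iterate_cyclicShift_fibVec (hper : Function.Periodic (fibMod p) l) (k m : ℕ) :
    (cyclicShift p l)^[k] (fibVec p l m) = fibVec p l (m + k * (l - 1)) := by
  induction k with
  | zero => simp
  | succ k ih =>
    rw [Function.iterate_succ_apply', ih, cyclicShift_fibVec hper, add_one_mul, add_assoc]

lemma fibVec_eq_add (h₀ : fibMod p l = 0) (h₁ : fibMod p (l + 1) = 1) (m : ℕ) :
    fibVec p l m = fibMod p (m + 1) • fibVec p l 0 + fibMod p m • fibVec p l (l - 1) := by
  funext i
  simp only [fibVec, Pi.add_apply, Pi.smul_apply, smul_eq_mul, zero_add]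
  obtain ⟨i, hi⟩ := i
  rcases i with _ | j
  · simp [fibMod, fibMod_sub_one h₀ h₁ hi]
  · rw [show l - 1 + (j + 1) = j + l by omega, fibMod_periodic h₀ h₁, ← add_assoc,
      fibMod_add]
    ring

lemma fibCode_eq_span (hpis : l ≤ pisano p) (h₀ : fibMod p l = 0)
    (h₁ : fibMod p (l + 1) = 1) :
    fibCode p l = Submodule.span (ZMod p) {fibVec p l 0, fibVec p l (l - 1)} := by
  have hper := fibMod_periodic h₀ h₁
  rw [fibCode, cyclicCode, polyVec_fibPoly hpis]
  apply le_antisymm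
  · rw [Submodule.span_le]
    rintro _ ⟨k, rfl⟩
    rw [iterate_cyclicShift_fibVec hper, fibVec_eq_add h₀ h₁ (0 + k * (l - 1))]
    exact Submodule.mem_span_pair.2 ⟨_, _, rfl⟩
  · rw [Submodule.span_le]
    rintro _ (rfl | rfl)
    · exact Submodule.subset_span ⟨0, rfl⟩
    · exact Submodule.subset_span ⟨1, by rw [iterate_cyclicShift_fibVec hper]; simp⟩

end FibCode

section MinimalCodeword

variable {p l : ℕ} [Fact p.Prime] {u w : Fin l → ZMod p}

lemma smul_add_eq_smul_of_apply_eq_zero {x a b : ZMod p} {i : Fin l} (hui : u i ≠ 0)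
    (hc : (x • u + w) i = 0) (hv : (a • u + b • w) i = 0) :
    a • u + b • w = b • (x • u + w) := by
  simp only [Pi.add_apply, Pi.smul_apply, smul_eq_mul] at hc hv
  have hab : a = b * x := by
    have : (a - b * x) * u i = 0 := by linear_combination hv - b * hc
    exact sub_eq_zero.1 ((mul_eq_zero.1 this).resolve_right hui)
  rw [hab, smul_add, mul_smul]

lemma isMinimalCodeword_span_pair_iff (hl : 0 < l) (hu : u ≠ 0) (hu₀ : u ⟨0, hl⟩ = 0)
    (hw₀ : w ⟨0, hl⟩ = 1) (huw : ∀ i, u i = 0 → w i ≠ 0) {c : Fin l → ZMod p} :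
    IsMinimalCodeword p l (Submodule.span (ZMod p) {u, w}) c ↔
      ∃ x : ZMod p, c = x • u + w ∧ ∃ i, u i ≠ 0 ∧ c i = 0 := by
  have hu_mem : u ∈ Submodule.span (ZMod p) {u, w} := Submodule.subset_span (by simp)
  have hw_mem : w ∈ Submodule.span (ZMod p) {u, w} := Submodule.subset_span (by simp)
  constructor
  · rintro ⟨hc, -, hc₀, hmin⟩
    obtain ⟨x, y, rfl⟩ := Submodule.mem_span_pair.1 hc
    obtain rfl : y = 1 := by simpa [hu₀, hw₀] using hc₀ hl
    rw [one_smul] at hmin ⊢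
    refine ⟨x, rfl, ?_⟩
    by_contra! hfull
    obtain ⟨k, hk⟩ := hmin u hu_mem fun i _ hi =>
      hfull i (fun h => huw i h (by simpa [h] using hi)) hi
    obtain rfl : k = 0 := by simpa [hu₀, hw₀] using (congrFun hk ⟨0, hl⟩).symm
    exact hu (by rw [hk, zero_smul])
  · rintro ⟨x, rfl, i, hui, hi⟩
    have hc₀ : (x • u + w) ⟨0, hl⟩ = 1 := by simp [hu₀, hw₀]
    refine ⟨add_mem (Submodule.smul_mem _ _ hu_mem) hw_mem,
      fun h => zero_ne_one ((congrFun h _).symm.trans hc₀), fun _ => hc₀,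
      fun v hv hsupp => ?_⟩
    obtain ⟨a, b, rfl⟩ := Submodule.mem_span_pair.1 hv
    have hvi : (a • u + b • w) i = 0 := by
      by_contra h
      exact hsupp i h hi
    exact ⟨b, smul_add_eq_smul_of_apply_eq_zero hui hi hvi⟩

end MinimalCodeword

lemma fibMod_pisano {p l : ℕ} (hpis : pisano p = l) (hl : 0 < l) :
    fibMod p l = 0 ∧ fibMod p (l + 1) = 1 := by
  subst hpis
  exact (Nat.sInf_mem (Nat.nonempty_of_pos_sInf hl)).2

lemma Nat.dvd_add_iff_eq_sub_mod {a k i : ℕ} (hk : k ∈ Ioo 0 a) (hi : ¬ a ∣ i) :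
    a ∣ k + i ↔ k = a - i % a := by
  obtain ⟨hk₀, hka⟩ := mem_Ioo.1 hk
  have hmod : 0 < i % a := Nat.emod_pos_of_not_dvd hi
  have hlt : i % a < a := Nat.mod_lt i (hk₀.trans hka)
  have hreduce : a ∣ k + i ↔ a ∣ k + i % a := by
    simp only [Nat.dvd_iff_mod_eq_zero, Nat.add_mod_mod]
  rw [hreduce]
  constructor
  · intro h
    have := Nat.eq_of_dvd_of_lt_two_mul (by omega) h (by omega)
    omega
  · intro h
    exact ⟨1, by omega⟩

lemma Nat.sub_mod_mem_Ioo {a i : ℕ} (ha : 0 < a) (hi : ¬ a ∣ i) : a - i % a ∈ Ioo 0 a := by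
  have := Nat.emod_pos_of_not_dvd hi
  have := Nat.mod_lt i ha
  exact mem_Ioo.2 ⟨by omega, by omega⟩

noncomputable def normFibVec (p l k : ℕ) : Fin l → ZMod p := (fibMod p k)⁻¹ • fibVec p l k

section FibCodeMinimal

variable {p l α : ℕ} [Fact p.Prime]

lemma normFibVec_eq (h₀ : fibMod p l = 0) (h₁ : fibMod p (l + 1) = 1) {k : ℕ}
    (hk : fibMod p k ≠ 0) :
    normFibVec p l k = (fibMod p (k + 1) / fibMod p k) • fibVec p l 0 + fibVec p l (l - 1) := by
  rw [normFibVec, fibVec_eq_add h₀ h₁ k, smul_add, smul_smul, smul_smul, inv_mul_cancel₀ hk,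
    one_smul, div_eq_inv_mul]

lemma normFibVec_apply_eq_zero_iff (hα : IsLeast {t | 0 < t ∧ fibMod p t = 0} α) {k : ℕ}
    (hk : k ∈ Ioo 0 α) {i : Fin l} (hi : ¬ α ∣ i) :
    normFibVec p l k i = 0 ↔ k = α - i % α := by
  have hkα : ¬ α ∣ k := Nat.not_dvd_of_pos_of_lt (mem_Ioo.1 hk).1 (mem_Ioo.1 hk).2
  simp [normFibVec, fibVec, fibMod_eq_zero_iff_dvd hα, hkα, Nat.dvd_add_iff_eq_sub_mod hk hi]

lemma isMinimalCodeword_fibCode_iff (hpis : pisano p = l) (hl : 0 < l) {c : Fin l → ZMod p} :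
    IsMinimalCodeword p l (fibCode p l) c ↔
      ∃ x : ZMod p, c = x • fibVec p l 0 + fibVec p l (l - 1) ∧
        ∃ i, fibVec p l 0 i ≠ 0 ∧ c i = 0 := by
  obtain ⟨h₀, h₁⟩ := fibMod_pisano hpis hl
  have hp : p ≠ 1 := (Fact.out : p.Prime).ne_one
  have hl₁ : 1 < l := by
    by_contra! h
    obtain rfl : l = 1 := by omega
    exact one_ne_zero (h₀ : (1 : ZMod p) = 0)
  rw [fibCode_eq_span hpis.ge h₀ h₁]
  refine isMinimalCodeword_span_pair_iff hl (fun h => ?_) rfl ?_ ?_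
  · exact one_ne_zero (congrFun h ⟨1, hl₁⟩ : (1 : ZMod p) = 0)
  · simpa [fibVec] using fibMod_sub_one h₀ h₁ hl
  · exact fun i hi => fibMod_sub_one_add_ne_zero h₀ h₁ hl hp (by simpa [fibVec] using hi)

lemma isMinimalCodeword_fibCode_iff_exists_normFibVec (hpis : pisano p = l) (hl : 0 < l)
    (hα : IsLeast {t | 0 < t ∧ fibMod p t = 0} α) {c : Fin l → ZMod p} :
    IsMinimalCodeword p l (fibCode p l) c ↔ ∃ k ∈ Ioo 0 α, c = normFibVec p l k := by
  obtain ⟨h₀, h₁⟩ := fibMod_pisano hpis hl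
  have hαl : α ≤ l := hα.2 ⟨hl, h₀⟩
  rw [isMinimalCodeword_fibCode_iff hpis hl]
  constructor
  · rintro ⟨x, rfl, j, huj, hj⟩
    have hj' : ¬ α ∣ j := fun h =>
      huj (by simpa [fibVec] using (fibMod_eq_zero_iff_dvd hα j).2 h)
    have hk := Nat.sub_mod_mem_Ioo hα.1.1 hj'
    refine ⟨_, hk, ?_⟩
    have hkz := (normFibVec_apply_eq_zero_iff hα hk hj').2 rfl
    rw [normFibVec_eq h₀ h₁ (fibMod_ne_zero_of_mem_Ioo hα hk)] at hkz ⊢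
    simpa using smul_add_eq_smul_of_apply_eq_zero (a := x) (b := 1) huj hkz (by simpa using hj)
  · rintro ⟨k, hk, rfl⟩
    obtain ⟨hk₀, hkα⟩ := mem_Ioo.1 hk
    obtain ⟨i, hi⟩ : ∃ i : Fin l, (i : ℕ) = α - k := ⟨⟨α - k, by omega⟩, rfl⟩
    have hiα : ¬ α ∣ i := Nat.not_dvd_of_pos_of_lt (by omega) (by omega)
    refine ⟨_, normFibVec_eq h₀ h₁ (fibMod_ne_zero_of_mem_Ioo hα hk), i,
      fun h => hiα ((fibMod_eq_zero_iff_dvd hα i).1 (by simpa [fibVec] using h)), ?_⟩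
    rw [normFibVec_apply_eq_zero_iff hα hk hiα, hi,
      Nat.mod_eq_of_lt (by omega)]
    omega

lemma injOn_normFibVec (hpis : pisano p = l) (hl : 0 < l)
    (hα : IsLeast {t | 0 < t ∧ fibMod p t = 0} α) :
    Set.InjOn (normFibVec p l) (Ioo 0 α : Finset ℕ) := by
  intro k hk k' hk' heq
  have hαl : α ≤ l := hα.2 ⟨hl, (fibMod_pisano hpis hl).1⟩
  obtain ⟨hk₀, hkα⟩ := mem_Ioo.1 hk
  obtain ⟨hk₀', hkα'⟩ := mem_Ioo.1 hk'
  obtain ⟨i, hi⟩ : ∃ i : Fin l, (i : ℕ) = α - k := ⟨⟨α - k, by omega⟩, rfl⟩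
  have hiα : ¬ α ∣ i := Nat.not_dvd_of_pos_of_lt (by omega) (by omega)
  have hmod : (i : ℕ) % α = α - k := by rw [hi, Nat.mod_eq_of_lt (by omega)]
  have hz := (normFibVec_apply_eq_zero_iff hα hk hiα).2 (by omega)
  rw [heq, normFibVec_apply_eq_zero_iff hα hk' hiα] at hz
  omega

lemma setOf_isMinimalCodeword_fibCode (hpis : pisano p = l) (hl : 0 < l)
    (hα : IsLeast {t | 0 < t ∧ fibMod p t = 0} α) :
    {c | IsMinimalCodeword p l (fibCode p l) c} =
      ((Ioo 0 α).image (normFibVec p l) : Finset _) := by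
  ext c
  simp [isMinimalCodeword_fibCode_iff_exists_normFibVec hpis hl hα, eq_comm]

lemma ncard_setOf_isMinimalCodeword_fibCode (hpis : pisano p = l) (hl : 0 < l)
    (hα : IsLeast {t | 0 < t ∧ fibMod p t = 0} α) :
    {c | IsMinimalCodeword p l (fibCode p l) c}.ncard = α - 1 := by
  rw [setOf_isMinimalCodeword_fibCode hpis hl hα, Set.ncard_coe_finset,
    card_image_of_injOn (injOn_normFibVec hpis hl hα), Nat.card_Ioo, Nat.sub_zero]

lemma IsMinimalCodeword.fibCode_apply_ne_zero (hpis : pisano p = l) (hl : 0 < l)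
    (hα : IsLeast {t | 0 < t ∧ fibMod p t = 0} α) {c : Fin l → ZMod p}
    (hc : IsMinimalCodeword p l (fibCode p l) c) {i : Fin l} (hi : α ∣ i) : c i ≠ 0 := by
  obtain ⟨h₀, h₁⟩ := fibMod_pisano hpis hl
  obtain ⟨x, rfl, -⟩ := (isMinimalCodeword_fibCode_iff hpis hl).1 hc
  have hFi : fibMod p i = 0 := (fibMod_eq_zero_iff_dvd hα i).2 hi
  simpa [fibVec, hFi] using fibMod_sub_one_add_ne_zero h₀ h₁ hl (Fact.out : p.Prime).ne_one hFi

lemma ncard_setOf_isMinimalCodeword_fibCode_apply_ne_zero (hpis : pisano p = l) (hl : 0 < l)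
    (hα : IsLeast {t | 0 < t ∧ fibMod p t = 0} α) {i : Fin l} (hi : ¬ α ∣ i) :
    {c | IsMinimalCodeword p l (fibCode p l) c ∧ c i ≠ 0}.ncard = α - 2 := by
  have hzero := Nat.sub_mod_mem_Ioo hα.1.1 hi
  have hset : {c | IsMinimalCodeword p l (fibCode p l) c ∧ c i ≠ 0}
      = (((Ioo 0 α).erase (α - i % α)).image (normFibVec p l) : Finset _) := by
    ext c
    simp only [Set.mem_ofPred_eq, isMinimalCodeword_fibCode_iff_exists_normFibVec hpis hl hα,
      coe_image, Set.mem_image, mem_coe, mem_erase]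
    constructor
    · rintro ⟨⟨k, hk, rfl⟩, hne⟩
      exact ⟨k, ⟨fun h => hne ((normFibVec_apply_eq_zero_iff hα hk hi).2 h), hk⟩, rfl⟩
    · rintro ⟨k, ⟨hne, hk⟩, rfl⟩
      exact ⟨⟨k, hk, rfl⟩, fun h => hne ((normFibVec_apply_eq_zero_iff hα hk hi).1 h)⟩
  rw [hset, Set.ncard_coe_finset, card_image_of_injOn ((injOn_normFibVec hpis hl hα).mono
    (coe_subset.2 (erase_subset _ _))), card_erase_of_mem hzero, Nat.card_Ioo]
  omega

end FibCodeMinimal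

lemma pisano_eq_mul_betaP {p l α : ℕ} (hpis : pisano p = l) (hl : 0 < l)
    (hα : IsLeast {t | 0 < t ∧ fibMod p t = 0} α) : l = α * betaP p := by
  obtain ⟨m, rfl⟩ := (fibMod_eq_zero_iff_dvd hα l).1 (fibMod_pisano hpis hl).1
  rw [betaP, hpis, filter_congr (fun i _ => fibMod_eq_zero_iff_dvd hα i),
    card_filter_dvd_range_mul hα.1.1]

theorem fibCode_minimal_codewords_long_beta_four_general (p : ℕ) [Fact p.Prime]
    (hl : pisano p = 2 * p + 2) (hb : betaP p = 4) :
    Set.ncard {c | IsMinimalCodeword p (2 * p + 2) (fibCode p (2 * p + 2)) c}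
        = (p - 1) / 2 ∧
      (∀ i : Fin (2 * p + 2),
        ((i : ℕ) = (p + 1) / 2 ∨ (i : ℕ) = p + 1 ∨ (i : ℕ) = 3 * (p + 1) / 2) →
        ∀ c, IsMinimalCodeword p (2 * p + 2) (fibCode p (2 * p + 2)) c → c i ≠ 0) ∧
      ∀ i : Fin (2 * p + 2), 1 ≤ (i : ℕ) →
        (i : ℕ) ≠ (p + 1) / 2 → (i : ℕ) ≠ p + 1 → (i : ℕ) ≠ 3 * (p + 1) / 2 →
        Set.ncard {c | IsMinimalCodeword p (2 * p + 2) (fibCode p (2 * p + 2)) c ∧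
          c i ≠ 0} = (p - 3) / 2 := by
  have hl₀ : 0 < 2 * p + 2 := by omega
  obtain ⟨α, hα⟩ : ∃ α, IsLeast {t | 0 < t ∧ fibMod p t = 0} α :=
    ⟨_, isLeast_csInf (s := {t | 0 < t ∧ fibMod p t = 0})
      ⟨_, hl₀, (fibMod_pisano hl hl₀).1⟩⟩
  have hlα : 2 * p + 2 = α * 4 := hb ▸ pisano_eq_mul_betaP hl hl₀ hα
  refine ⟨?_, fun i hi c hc => ?_, fun i hi₁ hi₂ hi₃ hi₄ => ?_⟩
  · rw [ncard_setOf_isMinimalCodeword_fibCode hl hl₀ hα]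
    omega
  · refine hc.fibCode_apply_ne_zero hl hl₀ hα ?_
    rcases hi with hi | hi | hi
    exacts [⟨1, by omega⟩, ⟨2, by omega⟩, ⟨3, by omega⟩]
  · have hi : ¬ α ∣ i := by
      rintro ⟨m, hm⟩
      have hm₄ : m < 4 := lt_of_mul_lt_mul_left (by omega : α * m < α * 4) (Nat.zero_le α)
      interval_cases m <;> omega
    rw [ncard_setOf_isMinimalCodeword_fibCode_apply_ne_zero hl hl₀ hα hi]
    omega

/-- For an odd prime `p` with `l_p = 2p + 2` and `β(p) = 4`, the
`[2p+2, 2, 2p-2]` cyclic code `C = ⟨f(x)⟩` has exactly `(p-1)/2` minimal codewords; each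
of the coordinates `(p+1)/2`, `p+1` and `3(p+1)/2` lies in the support of every minimal
codeword (dictatorial participants); and every other coordinate `i` with `1 ≤ i ≤ 2p + 1`
lies in the support of exactly `(p-3)/2` of them. -/
theorem fibCode_minimal_codewords_long_beta_four (p : ℕ) [Fact p.Prime] (hodd : Odd p)
    (hl : pisano p = 2 * p + 2) (hb : betaP p = 4) :
    Set.ncard {c | IsMinimalCodeword p (2 * p + 2) (fibCode p (2 * p + 2)) c}
        = (p - 1) / 2 ∧
      (∀ i : Fin (2 * p + 2),
        ((i : ℕ) = (p + 1) / 2 ∨ (i : ℕ) = p + 1 ∨ (i : ℕ) = 3 * (p + 1) / 2) →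
        ∀ c, IsMinimalCodeword p (2 * p + 2) (fibCode p (2 * p + 2)) c → c i ≠ 0) ∧
      ∀ i : Fin (2 * p + 2), 1 ≤ (i : ℕ) →
        (i : ℕ) ≠ (p + 1) / 2 → (i : ℕ) ≠ p + 1 → (i : ℕ) ≠ 3 * (p + 1) / 2 →
        Set.ncard {c | IsMinimalCodeword p (2 * p + 2) (fibCode p (2 * p + 2)) c ∧
          c i ≠ 0} = (p - 3) / 2 :=
  fibCode_minimal_codewords_long_beta_four_general p hl hb
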